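/- Let n ∈ ℕ, λ ∈ ℝ, and x ∈ ℝ with x ≠ kλ for every integer k with −(n−1) ≤ k ≤ n−1, let y ∈ ℝ, and let a = (a_0, …, a_n) be real numbers. Let P_{n,λ}[x,y,a] be the (n+1)×(n+1) matrix with entries (P_{n,λ}[x,y,a])_{ij} = a_{j−1} x^{(i−j)|λ} y^{(j−1)|λ} · binom(i−1, j−1) for 1 ≤ j ≤ i ≤ n+1 and 0 for j > i. For each t = 1, …, n let F_t be the (n+1)×(n+1) lower bidiagonal matrix with ones on the diagonal, subdiagonal entries (F_t)_{r,r−1} = x + (2t−r)λ for r = t+1, …, n+1, zeros for r ≤ t, and zeros elsewhere, and let D = diag(a_0, a_1 y^{1|λ}, …, a_n y^{n|λ}). Then P_{n,λ}[x,y,a] = F_n F_{n−1} ⋯ F_1 D. -/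
import Mathlib


/-- `genPow x lam m` is the generalized power `x^{m|λ} = x(x+λ)⋯(x+(m−1)λ)`,
with `x^{0|λ} = 1`. -/
noncomputable def genPow (x lam : ℝ) (m : ℕ) : ℝ :=
  ∏ t ∈ Finset.range m, (x + t * lam)

/-- The matrix `P_{n,λ}[x,y,a]` with entries
`a_{j−1}·x^{(i−j)|λ}·y^{(j−1)|λ}·binom(i−1,j−1)` for `1 ≤ j ≤ i ≤ n+1` and
`0` for `j > i`; here `a : Fin (n+1) → ℝ` lists `a_0, …, a_n` and the
indexing is 0-based. -/
noncomputable def genPascalXYA (n : ℕ) (x y lam : ℝ) (a : Fin (n + 1) → ℝ) :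
    Matrix (Fin (n + 1)) (Fin (n + 1)) ℝ :=
  fun i j =>
    if (j : ℕ) ≤ (i : ℕ) then
      a j * genPow x lam ((i : ℕ) - (j : ℕ)) * genPow y lam (j : ℕ) *
        ((i : ℕ).choose (j : ℕ))
    else 0

/-- The lower bidiagonal matrix `F_t`: ones on the diagonal, entry at math
position `(r, r−1)` equal to `x + (2t−r)λ` for `r = t+1, …, n+1`, zero for
`r ≤ t`, and zeros elsewhere.  In 0-based indexing, row `i` corresponds to
`r = i+1`. -/
noncomputable def Fmat (n : ℕ) (x lam : ℝ) (t : ℕ) :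
    Matrix (Fin (n + 1)) (Fin (n + 1)) ℝ :=
  fun i j =>
    if (i : ℕ) = (j : ℕ) then 1
    else if (i : ℕ) = (j : ℕ) + 1 ∧ t ≤ (i : ℕ) then
      x + (2 * (t : ℝ) - ((i : ℕ) + 1)) * lam
    else 0

lemma genPow_zero (z lam : ℝ) : genPow z lam 0 = 1 := Finset.prod_range_zero _

lemma genPow_succ (z lam : ℝ) (m : ℕ) :
    genPow z lam (m + 1) = genPow z lam m * (z + m * lam) := Finset.prod_range_succ _ _

lemma genPow_succ_left (z lam : ℝ) (m : ℕ) :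
    genPow z lam (m + 1) = z * genPow (z + lam) lam m := by
  unfold genPow
  rw [Finset.prod_range_succ']
  rw [mul_comm]
  congr 1
  · simp
  · exact Finset.prod_congr rfl (fun k _ => by push_cast; ring)

lemma key_identity (z lam : ℝ) (m p : ℕ) :
    (((m + p + 2).choose (p + 1) : ℝ)) * genPow z lam (m + 1) =
      ((m + p + 1).choose p : ℝ) * genPow (z + lam) lam (m + 1) +
      ((m + p + 1).choose (p + 1) : ℝ) * genPow (z + lam) lam m * (z - (p + 1) * lam) := by
  have h1 : (m + p + 1).choose (p + 1) * (p + 1) = (m + 1) * (m + p + 1).choose p := by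
    rw [Nat.choose_succ_right_eq]
    have h : m + p + 1 - p = m + 1 := by omega
    rw [h, Nat.mul_comm]
  have h2 : (m + p + 2).choose (p + 1) = (m + p + 1).choose p + (m + p + 1).choose (p + 1) := by
    exact Nat.choose_succ_succ (m + p + 1) p
  have h1' : ((m + p + 1).choose (p + 1) : ℝ) * ((p : ℝ) + 1)
      = ((m : ℝ) + 1) * ((m + p + 1).choose p : ℝ) := by exact_mod_cast h1
  have h2' : (((m + p + 2).choose (p + 1) : ℝ))
      = ((m + p + 1).choose p : ℝ) + ((m + p + 1).choose (p + 1) : ℝ) := by exact_mod_cast h2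
  rw [genPow_succ_left z lam m, genPow_succ (z + lam) lam m]
  linear_combination genPow (z + lam) lam m * z * h2' + genPow (z + lam) lam m * lam * h1'

/-- Partial product `F_n ⋯ F_{t+1}`. -/
noncomputable def Smat (n : ℕ) (x lam : ℝ) (t : ℕ) :
    Matrix (Fin (n + 1)) (Fin (n + 1)) ℝ :=
  fun i j =>
    if (j : ℕ) < t then (if (i : ℕ) = (j : ℕ) then 1 else 0)
    else if (j : ℕ) ≤ (i : ℕ) then
      (((i : ℕ) - t).choose ((j : ℕ) - t) : ℝ) *
        genPow (x + (t : ℝ) * lam) lam ((i : ℕ) - (j : ℕ))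
    else 0

lemma Smat_top (n : ℕ) (x lam : ℝ) : Smat n x lam n = 1 := by
  ext i j
  have hi : (i : ℕ) ≤ n := Nat.lt_succ_iff.mp i.isLt
  have hj : (j : ℕ) ≤ n := Nat.lt_succ_iff.mp j.isLt
  simp only [Smat, Matrix.one_apply]
  by_cases h1 : (j : ℕ) < n
  · rw [if_pos h1]
    by_cases h2 : i = j
    · rw [if_pos (by rw [h2]), if_pos h2]
    · rw [if_neg (fun h => h2 (Fin.ext h)), if_neg h2]
  · have hjn : (j : ℕ) = n := by omega
    rw [if_neg h1]
    by_cases h3 : (j : ℕ) ≤ (i : ℕ)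
    · have hij : (i : ℕ) = (j : ℕ) := by omega
      rw [if_pos h3, if_pos (Fin.ext hij), hij]
      simp [Nat.sub_self, genPow_zero]
    · rw [if_neg h3, if_neg (fun h => h3 (le_of_eq (congrArg Fin.val h).symm))]

lemma Smat_step (n : ℕ) (x lam : ℝ) (t : ℕ) :
    Smat n x lam (t + 1) * Fmat n x lam (t + 1) = Smat n x lam t := by
  ext i j
  rw [Matrix.mul_apply]
  have hi : (i : ℕ) ≤ n := Nat.lt_succ_iff.mp i.isLt
  have hj : (j : ℕ) ≤ n := Nat.lt_succ_iff.mp j.isLt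
  by_cases hjn : (j : ℕ) < n
  · set j' : Fin (n + 1) := ⟨(j : ℕ) + 1, by omega⟩ with hj'def
    have hj'val : (j' : ℕ) = (j : ℕ) + 1 := rfl
    have hjj' : j ≠ j' := by
      intro h
      have := congrArg Fin.val h
      omega
    have hsum : ∑ k, Smat n x lam (t + 1) i k * Fmat n x lam (t + 1) k j
        = Smat n x lam (t + 1) i j * Fmat n x lam (t + 1) j j
          + Smat n x lam (t + 1) i j' * Fmat n x lam (t + 1) j' j := by
      apply Finset.sum_eq_add_of_mem j j' (Finset.mem_univ _) (Finset.mem_univ _) hjj'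
      intro k _ hk
      have h1 : ¬ ((k : ℕ) = (j : ℕ)) := fun h => hk.1 (Fin.ext h)
      have h2 : ¬ ((k : ℕ) = (j : ℕ) + 1) := by
        intro h
        exact hk.2 (Fin.ext (by rw [h, hj'val]))
      simp [Fmat, h1, h2]
    rw [hsum]
    have hFjj : Fmat n x lam (t + 1) j j = 1 := by simp [Fmat]
    have hFj'j : Fmat n x lam (t + 1) j' j =
        if t ≤ (j : ℕ) then x + (2 * ((t : ℕ) + 1 : ℝ) - (((j : ℕ) : ℝ) + 2)) * lam else 0 := by
      simp only [Fmat, hj'val]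
      rw [if_neg (by omega)]
      by_cases ht : t ≤ (j : ℕ)
      · rw [if_pos (show _ from ⟨by trivial, by omega⟩), if_pos ht]
        push_cast
        ring
      · rw [if_neg (by omega), if_neg ht]
    rw [hFjj, mul_one, hFj'j]
    by_cases h1 : (j : ℕ) < t
    · rw [if_neg (by omega), mul_zero, add_zero]
      simp only [Smat]
      rw [if_pos h1, if_pos (by omega : (j : ℕ) < t + 1)]
    · have h1' : t ≤ (j : ℕ) := le_of_not_gt h1
      rw [if_pos h1']
      by_cases h2 : (j : ℕ) = t
      · -- j = t
        by_cases h3 : (j : ℕ) < (i : ℕ)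
        · -- subdiagonal contribution only
          obtain ⟨m, hm⟩ : ∃ m, (i : ℕ) - (j : ℕ) = m + 1 := ⟨(i : ℕ) - (j : ℕ) - 1, by omega⟩
          simp only [Smat, hj'val]
          rw [if_pos (by omega : (j : ℕ) < t + 1), if_neg (by omega : ¬ (i : ℕ) = (j : ℕ)),
            if_neg (by omega : ¬ (j : ℕ) + 1 < t + 1), if_pos (by omega : (j : ℕ) + 1 ≤ (i : ℕ)),
            if_neg h1, if_pos (le_of_lt h3)]
          have e1 : (i : ℕ) - ((j : ℕ) + 1) = m := by omega
          have e2 : (j : ℕ) + 1 - (t + 1) = 0 := by omega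
          have e3 : (i : ℕ) - t = m + 1 := by omega
          have e4 : (j : ℕ) - t = 0 := by omega
          rw [e1, e2, e3, e4, hm]
          have harg : x + ((t + 1 : ℕ) : ℝ) * lam = (x + (t : ℝ) * lam) + lam := by
            push_cast; ring
          rw [harg, genPow_succ_left (x + (t : ℝ) * lam) lam m]
          have hjr : ((j : ℕ) : ℝ) = (t : ℝ) := by exact_mod_cast h2
          rw [hjr]
          simp only [Nat.choose_zero_right, Nat.cast_one]
          ring
        · -- i ≤ j
          simp only [Smat, hj'val]
          rw [if_pos (by omega : (j : ℕ) < t + 1),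
            if_neg (by omega : ¬ (j : ℕ) + 1 < t + 1),
            if_neg (by omega : ¬ (j : ℕ) + 1 ≤ (i : ℕ)), zero_mul, add_zero, if_neg h1]
          by_cases h4 : (i : ℕ) = (j : ℕ)
          · rw [if_pos h4, if_pos (by omega), h4]
            simp [Nat.sub_self, genPow_zero]
          · rw [if_neg h4, if_neg (by omega)]
      · -- t < j
        have h2' : t + 1 ≤ (j : ℕ) := by omega
        by_cases h3 : (j : ℕ) < (i : ℕ)
        · -- main case: key identity
          obtain ⟨m, hm⟩ : ∃ m, (i : ℕ) - (j : ℕ) = m + 1 := ⟨(i : ℕ) - (j : ℕ) - 1, by omega⟩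
          obtain ⟨p, hp⟩ : ∃ p, (j : ℕ) - t = p + 1 := ⟨(j : ℕ) - t - 1, by omega⟩
          simp only [Smat, hj'val]
          rw [if_neg (by omega : ¬ (j : ℕ) < t + 1), if_pos (le_of_lt h3),
            if_neg (by omega : ¬ (j : ℕ) + 1 < t + 1), if_pos (by omega : (j : ℕ) + 1 ≤ (i : ℕ)),
            if_pos (le_of_lt h3)]
          have e1 : (i : ℕ) - (t + 1) = m + p + 1 := by omega
          have e2 : (j : ℕ) - (t + 1) = p := by omega
          have e3 : (i : ℕ) - ((j : ℕ) + 1) = m := by omega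
          have e4 : (i : ℕ) - t = m + p + 2 := by omega
          have e5 : (j : ℕ) + 1 - (t + 1) = p + 1 := by omega
          rw [e1, e2, e3, e4, e5, hm, hp, if_neg h1]
          have harg : x + ((t + 1 : ℕ) : ℝ) * lam = (x + (t : ℝ) * lam) + lam := by
            push_cast; ring
          rw [harg]
          have hjr : ((j : ℕ) : ℝ) = (p : ℝ) + (t : ℝ) + 1 := by
            have : (j : ℕ) = p + t + 1 := by omega
            exact_mod_cast this
          rw [hjr]
          have := key_identity (x + (t : ℝ) * lam) lam m p
          linear_combination -this
        · -- i ≤ j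
          simp only [Smat, hj'val]
          rw [if_neg (by omega : ¬ (j : ℕ) < t + 1),
            if_neg (by omega : ¬ (j : ℕ) + 1 < t + 1),
            if_neg (by omega : ¬ (j : ℕ) + 1 ≤ (i : ℕ)), zero_mul, add_zero]
          rw [if_neg h1]
          by_cases h4 : (j : ℕ) ≤ (i : ℕ)
          · have h5 : (i : ℕ) = (j : ℕ) := by omega
            rw [if_pos h4, if_pos h4, h5]
            simp [Nat.sub_self, genPow_zero]
          · rw [if_neg h4, if_neg h4]
  · -- j = n : only the diagonal term survives
    have hjn' : (j : ℕ) = n := by omega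
    have hsum : ∑ k, Smat n x lam (t + 1) i k * Fmat n x lam (t + 1) k j
        = Smat n x lam (t + 1) i j := by
      rw [Finset.sum_eq_single j]
      · rw [show Fmat n x lam (t + 1) j j = 1 by simp [Fmat], mul_one]
      · intro k _ hk
        have h1 : ¬ ((k : ℕ) = (j : ℕ)) := fun h => hk (Fin.ext h)
        have h2 : ¬ ((k : ℕ) = (j : ℕ) + 1) := by
          have : (k : ℕ) ≤ n := Nat.lt_succ_iff.mp k.isLt
          omega
        simp [Fmat, h1, h2]
      · intro h
        exact absurd (Finset.mem_univ j) h
    rw [hsum]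
    simp only [Smat]
    by_cases h1 : (j : ℕ) < t
    · rw [if_pos h1, if_pos (by omega : (j : ℕ) < t + 1)]
    · rw [if_neg h1]
      by_cases h2 : (j : ℕ) < t + 1
      · -- j = t
        rw [if_pos h2]
        by_cases h3 : (j : ℕ) ≤ (i : ℕ)
        · have h4 : (i : ℕ) = (j : ℕ) := by omega
          rw [if_pos h3, if_pos h4, h4]
          simp [Nat.sub_self, genPow_zero, show (j : ℕ) - t = 0 by omega]
        · rw [if_neg h3, if_neg (by omega : ¬ (i : ℕ) = (j : ℕ))]
      · rw [if_neg h2]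
        by_cases h3 : (j : ℕ) ≤ (i : ℕ)
        · have h4 : (i : ℕ) = (j : ℕ) := by omega
          rw [if_pos h3, if_pos h3, h4]
          simp [Nat.sub_self, genPow_zero]
        · rw [if_neg h3, if_neg h3]

lemma prod_Fmat (n : ℕ) (x lam : ℝ) : ∀ m, m ≤ n →
    ((List.range m).map (fun s => Fmat n x lam (n - s))).prod = Smat n x lam (n - m) := by
  intro m
  induction m with
  | zero => intro _; simpa using (Smat_top n x lam).symm
  | succ m ih =>
    intro hm
    rw [List.range_succ, List.map_append, List.prod_append, ih (by omega)]
    simp only [List.map_cons, List.map_nil, List.prod_cons, List.prod_nil, mul_one]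
    have h : n - m = (n - (m + 1)) + 1 := by omega
    rw [h, Smat_step]

/-- If `x ≠ kλ` for every integer `k` with `−(n−1) ≤ k ≤ n−1`, then
`P_{n,λ}[x,y,a] = F_n F_{n−1} ⋯ F_1 · D` where
`D = diag(a_0, a_1 y^{1|λ}, …, a_n y^{n|λ})`. -/
theorem genPascalXYA_bidiagonal_decomposition (n : ℕ) (x y lam : ℝ)
    (a : Fin (n + 1) → ℝ)
    (hx : ∀ k : ℤ, -((n : ℤ) - 1) ≤ k → k ≤ (n : ℤ) - 1 → x ≠ (k : ℝ) * lam) :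
    genPascalXYA n x y lam a =
      ((List.range n).map (fun s => Fmat n x lam (n - s))).prod *
        Matrix.diagonal (fun j : Fin (n + 1) => a j * genPow y lam (j : ℕ)) := by
  rw [prod_Fmat n x lam n le_rfl, Nat.sub_self]
  ext i j
  rw [Matrix.mul_diagonal]
  simp only [genPascalXYA, Smat, Nat.not_lt_zero, if_false, Nat.sub_zero]
  by_cases h : (j : ℕ) ≤ (i : ℕ)
  · rw [if_pos h, if_pos h]
    have : x + ((0 : ℕ) : ℝ) * lam = x := by push_cast; ring
    rw [this]
    ring
  · rw [if_neg h, if_neg h, zero_mul]
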